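/- Let P and Q* be probability measures supported on a compact set K ⊆ ℝ^d, let ρ0 be a probability measure on ℝ^{d+1}, and assume the feature map (w, x) ↦ σ(w·x̃) is measurable and uniformly bounded on (support of ρ0) × K, where x̃ = (x,1). For a ∈ L²(ρ0) let V_a(x) = ∫ a(w) σ(w·x̃) dρ0(w) and L(a) = ∫ V_a dQ* + log ∫ e^{-V_a} dP. Suppose Q* = Q_{V_{a*}} for some a* ∈ L²(ρ0). Let t ↦ a_t be a differentiable curve in L²(ρ0) satisfying the gradient flow d a_t/dt = −g(a_t), where g(a)(w) = ∫ σ(w·x̃) d(Q* − Q_{V_a})(x). Then for all t > 0, L(a_t) − L(a*) ≤ ‖a* − a_0‖²_{L²(ρ0)} / (2t); equivalently, KL(Q* ‖ Q_{V_{a_t}}) ≤ ‖a* − a_0‖²_{L²(ρ0)} / (2t). -/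

import Mathlib

open MeasureTheory Real
open scoped BigOperators

/-- The Gibbs (bias potential) distribution generated by potential `V` with base
distribution `P`: the measure with density `e^{-V} / ∫ e^{-V} dP` with respect to `P`. -/
noncomputable def gibbs {X : Type*} [MeasurableSpace X] (P : Measure X) (V : X → ℝ) :
    Measure X :=
  P.withDensity fun x => ENNReal.ofReal (Real.exp (-V x) / ∫ y, Real.exp (-V y) ∂P)

/-- The Kullback–Leibler divergence `KL(Q₁‖Q₂) = ∫ log (dQ₁/dQ₂) dQ₁`. -/
noncomputable def klDiv {X : Type*} [MeasurableSpace X] (Q1 Q2 : Measure X) : ℝ :=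
  ∫ x, Real.log ((Q1.rnDeriv Q2) x).toReal ∂Q1

/-- `w · x̃` where `x̃ = (x, 1) ∈ ℝ^{d+1}`. -/
def dotTilde {d : ℕ} (w : Fin (d + 1) → ℝ) (x : Fin d → ℝ) : ℝ :=
  (∑ i : Fin d, w i.castSucc * x i) + w (Fin.last d)

/-- The random feature potential `V_a(x) = ∫ a(w) σ(w·x̃) dρ₀(w)`. -/
noncomputable def rfPotential {d : ℕ} (ρ0 : Measure (Fin (d + 1) → ℝ)) (σ : ℝ → ℝ)
    (a : (Fin (d + 1) → ℝ) → ℝ) (x : Fin d → ℝ) : ℝ :=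
  ∫ w, a w * σ (dotTilde w x) ∂ρ0

/-- The population objective `L(a) = ∫ V_a dQ* + log ∫ e^{-V_a} dP`. -/
noncomputable def rfObjective {d : ℕ} (P Qstar : Measure (Fin d → ℝ))
    (ρ0 : Measure (Fin (d + 1) → ℝ)) (σ : ℝ → ℝ)
    (a : (Fin (d + 1) → ℝ) → ℝ) : ℝ :=
  (∫ x, rfPotential ρ0 σ a x ∂Qstar) +
    Real.log (∫ x, Real.exp (-(rfPotential ρ0 σ a x)) ∂P)

/-!
The objective `L(a) = ∫ V_a dQ* + log ∫ e^{-V_a} dP` is convex in `a`: its first-order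
convexity inequality at `c`, with gradient `g(c)(w) = ∫ σ(w·x̃) d(Q* − Q_{V_c})`, is Gibbs'
inequality `KL(Q_{V_c} ‖ Q_{V_b}) ≥ 0`. Along the gradient flow `L` decreases at rate `‖g(a_t)‖²`
and `‖a_t − a*‖²` at rate `2⟨a_t − a*, g(a_t)⟩`, so convexity makes the Lyapunov function
`t (L(a_t) − L(a*)) + ‖a_t − a*‖² / 2` non-increasing, which is the `1/t` rate. Finally
`KL(Q* ‖ Q_{V_a}) = L(a) − L(a*)` because `Q* = Q_{V_{a*}}`.
-/

/-- `s ↦ s (L s - L*) + φ s / 2` is a Lyapunov function: it is antitone on `[0, ∞)`. -/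
lemma sub_le_div_of_lyapunov {L L' φ φ' : ℝ → ℝ} {Lstar t : ℝ}
    (hL : ∀ s, HasDerivAt L (L' s) s) (hφ : ∀ s, HasDerivAt φ (φ' s) s)
    (hL' : ∀ s, 0 < s → L' s ≤ 0) (hconv : ∀ s, 0 < s → L s - Lstar + φ' s / 2 ≤ 0)
    (hφt : 0 ≤ φ t) (ht : 0 < t) :
    L t - Lstar ≤ φ 0 / (2 * t) := by
  set ψ : ℝ → ℝ := fun s => s * (L s - Lstar) + φ s / 2
  have hψ : ∀ s, HasDerivAt ψ (1 * (L s - Lstar) + s * L' s + φ' s / 2) s := fun s =>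
    ((hasDerivAt_id s).mul ((hL s).sub_const Lstar)).add ((hφ s).div_const 2)
  have hanti : AntitoneOn ψ (Set.Ici 0) := by
    refine antitoneOn_of_hasDerivWithinAt_nonpos (convex_Ici 0)
      (fun s _ => (hψ s).continuousAt.continuousWithinAt) (fun s _ => (hψ s).hasDerivWithinAt) ?_
    rw [interior_Ici]
    intro s hs
    nlinarith [hL' s hs, hconv s hs, Set.mem_Ioi.mp hs]
  have hψt : ψ t ≤ ψ 0 := hanti Set.self_mem_Ici (Set.mem_Ici.mpr ht.le) ht.le
  simp only [ψ, zero_mul, zero_add] at hψt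
  rw [le_div_iff₀ (by positivity)]
  linarith

lemma abs_le_add_of_hasDerivAt {u u' : ℝ → ℝ} {B : ℝ} (hu : ∀ s, HasDerivAt u (u' s) s)
    (hB : ∀ s, |u' s| ≤ B) {s₀ s : ℝ} (hs : s ∈ Metric.ball s₀ 1) : |u s| ≤ |u s₀| + B := by
  have hB0 : 0 ≤ B := (abs_nonneg _).trans (hB s₀)
  have hs' : |s - s₀| ≤ 1 := (Metric.mem_ball.mp hs).le
  have hlip : |u s - u s₀| ≤ B * |s - s₀| := by
    simpa only [Real.norm_eq_abs] using convex_univ.norm_image_sub_le_of_norm_hasDerivWithin_le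
      (fun r _ => (hu r).hasDerivWithinAt) (fun r _ => hB r) (Set.mem_univ s₀) (Set.mem_univ s)
  have := abs_sub_abs_le_abs_sub (u s) (u s₀)
  nlinarith

section ParametricIntegrals

variable {α : Type*} [MeasurableSpace α] {μ : Measure α}

lemma integrable_exp_neg_of_ae_abs_le [IsFiniteMeasure μ] {f : α → ℝ} {M : ℝ}
    (hf : AEStronglyMeasurable f μ) (hM : ∀ᵐ x ∂μ, |f x| ≤ M) :
    Integrable (fun x => exp (-f x)) μ := by
  refine .of_bound (continuous_exp.comp_aestronglyMeasurable hf.neg) (exp M) ?_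
  filter_upwards [hM] with x hx
  rw [Real.norm_eq_abs, abs_exp, exp_le_exp]
  exact neg_le.mp (neg_le_of_abs_le hx)

lemma hasDerivAt_integral_sq [IsFiniteMeasure μ] {f f' : ℝ → α → ℝ} {B s₀ : ℝ}
    (hf : ∀ s, MemLp (f s) 2 μ) (hf' : AEStronglyMeasurable (f' s₀) μ)
    (hderiv : ∀ᵐ x ∂μ, ∀ s, HasDerivAt (f · x) (f' s x) s)
    (hbound : ∀ᵐ x ∂μ, ∀ s, |f' s x| ≤ B) :
    HasDerivAt (fun s => ∫ x, f s x ^ 2 ∂μ) (∫ x, 2 * f s₀ x * f' s₀ x ∂μ) s₀ := by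
  refine (hasDerivAt_integral_of_dominated_loc_of_deriv_le (Metric.ball_mem_nhds s₀ one_pos)
    (F' := fun s x => 2 * f s x * f' s x) (bound := fun x => 2 * (|f s₀ x| + B) * B)
    (.of_forall fun s => (hf s).aestronglyMeasurable.pow 2) (hf s₀).integrable_sq
    (((hf s₀).aestronglyMeasurable.const_mul 2).mul hf') ?_ ?_ ?_).2
  · filter_upwards [hderiv, hbound] with x hx hxB s hs
    rw [Real.norm_eq_abs, abs_mul, abs_mul, abs_two]
    have hB0 : 0 ≤ B := (abs_nonneg _).trans (hxB s₀)
    gcongr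
    · exact abs_le_add_of_hasDerivAt hx hxB hs
    · exact hxB s
  · exact ((((hf s₀).integrable one_le_two).abs.add (integrable_const B)).const_mul 2).mul_const B
  · filter_upwards [hderiv] with x hx s _
    exact ((hx s).fun_pow 2).congr_deriv (by push_cast; ring)

lemma hasDerivAt_integral_exp_neg [IsFiniteMeasure μ] {G G' : ℝ → α → ℝ} {M B s₀ : ℝ}
    (hG : ∀ s, AEStronglyMeasurable (G s) μ) (hG' : AEStronglyMeasurable (G' s₀) μ)
    (hG₀ : ∀ᵐ x ∂μ, |G s₀ x| ≤ M) (hderiv : ∀ᵐ x ∂μ, ∀ s, HasDerivAt (G · x) (G' s x) s)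
    (hbound : ∀ᵐ x ∂μ, ∀ s, |G' s x| ≤ B) :
    HasDerivAt (fun s => ∫ x, exp (-G s x) ∂μ) (-∫ x, exp (-G s₀ x) * G' s₀ x ∂μ) s₀ := by
  have hexp : ∀ s, AEStronglyMeasurable (fun x => exp (-G s x)) μ := fun s =>
    continuous_exp.comp_aestronglyMeasurable (hG s).neg
  rw [← integral_neg]
  refine (hasDerivAt_integral_of_dominated_loc_of_deriv_le (Metric.ball_mem_nhds s₀ one_pos)
    (F' := fun s x => -(exp (-G s x) * G' s x)) (bound := fun _ => exp (M + B) * B)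
    (.of_forall hexp) (integrable_exp_neg_of_ae_abs_le (hG s₀) hG₀) ((hexp s₀).mul hG').neg ?_
    (integrable_const _) ?_).2
  · filter_upwards [hG₀, hderiv, hbound] with x hx₀ hx hxB s hs
    rw [Real.norm_eq_abs, abs_neg, abs_mul, abs_exp]
    have hB0 : 0 ≤ B := (abs_nonneg _).trans (hxB s₀)
    gcongr
    · exact neg_le.mp (neg_le_of_abs_le ((abs_le_add_of_hasDerivAt hx hxB hs).trans
        (add_le_add_left hx₀ B)))
    · exact hxB s
  · filter_upwards [hderiv] with x hx s _
    exact (hx s).fun_neg.exp.congr_deriv (by ring)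

end ParametricIntegrals

section Gibbs

variable {X : Type*} [MeasurableSpace X] {P Q : Measure X} {V V₁ V₂ : X → ℝ}

noncomputable def gibbsObjective (P Q : Measure X) (V : X → ℝ) : ℝ :=
  ∫ x, V x ∂Q + log (∫ x, exp (-V x) ∂P)

lemma gibbs_eq_tilted (P : Measure X) (V : X → ℝ) : gibbs P V = P.tilted fun x => -V x := rfl

instance [SFinite P] : SFinite (gibbs P V) := inferInstanceAs (SFinite (P.withDensity _))

lemma gibbs_absolutelyContinuous (P : Measure X) (V : X → ℝ) : gibbs P V ≪ P :=
  tilted_absolutelyContinuous _ _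

lemma isProbabilityMeasure_gibbs [IsProbabilityMeasure P]
    (hV : Integrable (fun x => exp (-V x)) P) : IsProbabilityMeasure (gibbs P V) :=
  isProbabilityMeasure_tilted hV

lemma integral_gibbs (P : Measure X) (V f : X → ℝ) :
    ∫ x, f x ∂gibbs P V = (∫ x, exp (-V x) * f x ∂P) / ∫ x, exp (-V x) ∂P := by
  rw [gibbs_eq_tilted, integral_tilted, ← integral_div]
  congr 1 with x
  rw [smul_eq_mul]; ring

lemma gibbs_eq_tilted_gibbs (h₂ : Integrable (fun x => exp (-V₂ x)) P) :
    gibbs P V₁ = (gibbs P V₂).tilted fun x => V₂ x - V₁ x := by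
  rw [gibbs_eq_tilted, gibbs_eq_tilted, tilted_tilted h₂]
  congr 1 with x
  simp only [Pi.add_apply]
  ring

lemma log_rnDeriv_gibbs_ae [IsProbabilityMeasure P] (h₁ : Integrable (fun x => exp (-V₁ x)) P)
    (h₂ : Integrable (fun x => exp (-V₂ x)) P) :
    (fun x => log ((gibbs P V₁).rnDeriv (gibbs P V₂) x).toReal) =ᵐ[gibbs P V₁]
      fun x => V₂ x - V₁ x + (log (∫ x, exp (-V₂ x) ∂P) - log (∫ x, exp (-V₁ x) ∂P)) := by
  have : IsProbabilityMeasure (gibbs P V₂) := isProbabilityMeasure_gibbs h₂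
  have hcancel : ∀ x, -V₂ x + (V₂ x - V₁ x) = -V₁ x := fun x => by ring
  have hint : Integrable (fun x => exp (V₂ x - V₁ x)) (gibbs P V₂) := by
    rw [gibbs_eq_tilted, integrable_tilted_iff h₂]
    simpa only [smul_eq_mul, ← exp_add, hcancel] using h₁
  have hZ : ∫ x, exp (V₂ x - V₁ x) ∂gibbs P V₂ = (∫ x, exp (-V₁ x) ∂P) / ∫ x, exp (-V₂ x) ∂P := by
    rw [gibbs_eq_tilted, integral_exp_tilted]
    simp only [Pi.add_apply, hcancel]
  rw [gibbs_eq_tilted_gibbs h₂]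
  refine (tilted_absolutelyContinuous _ _).ae_le ((log_rnDeriv_tilted_left_self hint).mono ?_)
  intro x hx
  rw [hx, hZ, log_div (integral_exp_pos h₁).ne' (integral_exp_pos h₂).ne']
  ring

lemma klDiv_gibbs [IsProbabilityMeasure P] (h₁ : Integrable (fun x => exp (-V₁ x)) P)
    (h₂ : Integrable (fun x => exp (-V₂ x)) P) (hV₁ : Integrable V₁ (gibbs P V₁))
    (hV₂ : Integrable V₂ (gibbs P V₁)) :
    klDiv (gibbs P V₁) (gibbs P V₂) =
      gibbsObjective P (gibbs P V₁) V₂ - gibbsObjective P (gibbs P V₁) V₁ := by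
  have : IsProbabilityMeasure (gibbs P V₁) := isProbabilityMeasure_gibbs h₁
  rw [klDiv, integral_congr_ae (log_rnDeriv_gibbs_ae h₁ h₂),
    integral_add (f := fun x => V₂ x - V₁ x) (hV₂.sub hV₁) (integrable_const _),
    integral_sub hV₂ hV₁, gibbsObjective, gibbsObjective]
  simp only [integral_const, probReal_univ, one_smul]
  ring

lemma klDiv_gibbs_nonneg [IsProbabilityMeasure P] (h₁ : Integrable (fun x => exp (-V₁ x)) P)
    (h₂ : Integrable (fun x => exp (-V₂ x)) P) (hV₁ : Integrable V₁ (gibbs P V₁))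
    (hV₂ : Integrable V₂ (gibbs P V₁)) :
    0 ≤ klDiv (gibbs P V₁) (gibbs P V₂) := by
  have : IsProbabilityMeasure (gibbs P V₁) := isProbabilityMeasure_gibbs h₁
  have : IsProbabilityMeasure (gibbs P V₂) := isProbabilityMeasure_gibbs h₂
  have hac : gibbs P V₁ ≪ gibbs P V₂ := by
    rw [gibbs_eq_tilted_gibbs (V₁ := V₁) h₂]; exact tilted_absolutelyContinuous _ _
  have hllr : Integrable (llr (gibbs P V₁) (gibbs P V₂)) (gibbs P V₁) :=
    ((hV₂.sub hV₁).add (integrable_const _)).congr (log_rnDeriv_gibbs_ae h₁ h₂).symm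
  simpa [klDiv, llr] using InformationTheory.integral_llr_add_sub_measure_univ_nonneg hac hllr

/-- First-order convexity of `V ↦ gibbsObjective P Q V`, whose gradient at `V₂` is
`Q - gibbs P V₂`. -/
lemma gibbsObjective_add_le [IsProbabilityMeasure P] (h₁ : Integrable (fun x => exp (-V₁ x)) P)
    (h₂ : Integrable (fun x => exp (-V₂ x)) P) (hV₁ : Integrable V₁ (gibbs P V₂))
    (hV₂ : Integrable V₂ (gibbs P V₂)) :
    gibbsObjective P Q V₂ + ((∫ x, V₁ x ∂Q - ∫ x, V₂ x ∂Q) -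
        (∫ x, V₁ x ∂gibbs P V₂ - ∫ x, V₂ x ∂gibbs P V₂)) ≤ gibbsObjective P Q V₁ := by
  have h := klDiv_gibbs_nonneg h₂ h₁ hV₂ hV₁
  rw [klDiv_gibbs h₂ h₁ hV₂ hV₁] at h
  simp only [gibbsObjective] at h ⊢
  linarith

lemma hasDerivAt_gibbsObjective [IsProbabilityMeasure P] [IsFiniteMeasure Q] (hQP : Q ≪ P)
    {G G' : ℝ → X → ℝ} {M B s₀ : ℝ}
    (hG : ∀ s, AEStronglyMeasurable (G s) P) (hG' : AEStronglyMeasurable (G' s₀) P)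
    (hG₀ : ∀ᵐ x ∂P, |G s₀ x| ≤ M) (hderiv : ∀ᵐ x ∂P, ∀ s, HasDerivAt (G · x) (G' s x) s)
    (hbound : ∀ᵐ x ∂P, ∀ s, |G' s x| ≤ B) :
    HasDerivAt (fun s => gibbsObjective P Q (G s))
      (∫ x, G' s₀ x ∂Q - ∫ x, G' s₀ x ∂gibbs P (G s₀)) s₀ := by
  have hlin : HasDerivAt (fun s => ∫ x, G s x ∂Q) (∫ x, G' s₀ x ∂Q) s₀ :=
    (hasDerivAt_integral_of_dominated_loc_of_deriv_le (bound := fun _ => B) Filter.univ_mem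
      (.of_forall fun s => (hG s).mono_ac hQP) (.of_bound ((hG s₀).mono_ac hQP) M (hQP.ae_le hG₀))
      (hG'.mono_ac hQP) (hQP.ae_le (hbound.mono fun x hx s _ => hx s)) (integrable_const B)
      (hQP.ae_le (hderiv.mono fun x hx s _ => hx s))).2
  have hZ := (hasDerivAt_integral_exp_neg hG hG' hG₀ hderiv hbound).log
    (integral_exp_pos (integrable_exp_neg_of_ae_abs_le (hG s₀) hG₀)).ne'
  refine (hlin.add hZ).congr_deriv ?_
  rw [integral_gibbs]
  ring

end Gibbs

lemma abs_integral_le_of_ae_abs_le {α : Type*} [MeasurableSpace α] {μ : Measure α}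
    [IsProbabilityMeasure μ] {f : α → ℝ} {C : ℝ} (h : ∀ᵐ x ∂μ, |f x| ≤ C) :
    |∫ x, f x ∂μ| ≤ C := by
  simpa using norm_integral_le_of_norm_le_const (μ := μ) (f := f) (C := C) h

section Features

variable {W X : Type*} {mW : MeasurableSpace W} {mX : MeasurableSpace X} {ρ : Measure W}
  {k : W → X → ℝ} {K : Set X} {C : ℝ}

noncomputable def featurePotential (ρ : Measure W) (k : W → X → ℝ) (b : W → ℝ) (x : X) : ℝ :=
  ∫ w, b w * k w x ∂ρ

noncomputable def featureMean (k : W → X → ℝ) (Q : Measure X) (w : W) : ℝ :=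
  ∫ x, k w x ∂Q

lemma stronglyMeasurable_featurePotential [SFinite ρ] (hk : Measurable (Function.uncurry k))
    {b : W → ℝ} (hb : AEStronglyMeasurable b ρ) :
    StronglyMeasurable (featurePotential ρ k b) := by
  have heq : featurePotential ρ k b = fun x => ∫ w, hb.mk b w * k w x ∂ρ :=
    funext fun x => integral_congr_ae (hb.ae_eq_mk.mono fun w hw => by simp only [hw])
  rw [heq]
  exact StronglyMeasurable.integral_prod_right
    ((hb.stronglyMeasurable_mk.measurable.comp measurable_snd).mul
      (hk.comp measurable_swap)).stronglyMeasurable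

lemma measurable_featureMean (hk : Measurable (Function.uncurry k)) (Q : Measure X) [SFinite Q] :
    Measurable (featureMean k Q) :=
  (StronglyMeasurable.integral_prod_right (f := k) (ν := Q) hk.stronglyMeasurable).measurable

lemma abs_featurePotential_le (hkb : ∀ᵐ w ∂ρ, ∀ x ∈ K, |k w x| ≤ C) {b : W → ℝ}
    (hb : Integrable b ρ) {x : X} (hx : x ∈ K) :
    |featurePotential ρ k b x| ≤ C * ∫ w, |b w| ∂ρ := by
  rw [← integral_const_mul C fun w => |b w|, ← Real.norm_eq_abs]
  refine norm_integral_le_of_norm_le (hb.abs.const_mul C) ?_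
  filter_upwards [hkb] with w hw
  rw [Real.norm_eq_abs, abs_mul, mul_comm C]
  exact mul_le_mul_of_nonneg_left (hw x hx) (abs_nonneg _)

lemma abs_featurePotential_le_of_abs_le [IsProbabilityMeasure ρ]
    (hkb : ∀ᵐ w ∂ρ, ∀ x ∈ K, |k w x| ≤ C) {b : W → ℝ} {B : ℝ} (hb : ∀ᵐ w ∂ρ, |b w| ≤ B)
    {x : X} (hx : x ∈ K) : |featurePotential ρ k b x| ≤ B * C := by
  refine abs_integral_le_of_ae_abs_le ?_
  filter_upwards [hkb, hb] with w hw hbw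
  rw [abs_mul]
  exact mul_le_mul hbw (hw x hx) (abs_nonneg _) ((abs_nonneg _).trans hbw)

lemma abs_featureMean_le {Q : Measure X} [IsProbabilityMeasure Q] (hQ : Q Kᶜ = 0) {w : W}
    (hw : ∀ x ∈ K, |k w x| ≤ C) : |featureMean k Q w| ≤ C :=
  abs_integral_le_of_ae_abs_le ((ae_iff.mpr hQ : ∀ᵐ x ∂Q, x ∈ K).mono hw)

lemma ae_abs_featurePotential_le (hkb : ∀ᵐ w ∂ρ, ∀ x ∈ K, |k w x| ≤ C) {b : W → ℝ}
    (hb : Integrable b ρ) {Q : Measure X} (hQ : Q Kᶜ = 0) :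
    ∀ᵐ x ∂Q, |featurePotential ρ k b x| ≤ C * ∫ w, |b w| ∂ρ :=
  (ae_iff.mpr hQ : ∀ᵐ x ∂Q, x ∈ K).mono fun _ hx => abs_featurePotential_le hkb hb hx

lemma integrable_featurePotential [SFinite ρ] (hk : Measurable (Function.uncurry k))
    (hkb : ∀ᵐ w ∂ρ, ∀ x ∈ K, |k w x| ≤ C) {b : W → ℝ} (hb : Integrable b ρ) {Q : Measure X}
    [IsFiniteMeasure Q] (hQ : Q Kᶜ = 0) : Integrable (featurePotential ρ k b) Q :=
  .of_bound (stronglyMeasurable_featurePotential hk hb.aestronglyMeasurable).aestronglyMeasurable _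
    (ae_abs_featurePotential_le hkb hb hQ)

lemma integrable_exp_neg_featurePotential [SFinite ρ] (hk : Measurable (Function.uncurry k))
    (hkb : ∀ᵐ w ∂ρ, ∀ x ∈ K, |k w x| ≤ C) {b : W → ℝ} (hb : Integrable b ρ) {Q : Measure X}
    [IsFiniteMeasure Q] (hQ : Q Kᶜ = 0) :
    Integrable (fun x => exp (-featurePotential ρ k b x)) Q :=
  integrable_exp_neg_of_ae_abs_le
    (stronglyMeasurable_featurePotential hk hb.aestronglyMeasurable).aestronglyMeasurable
    (ae_abs_featurePotential_le hkb hb hQ)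

lemma integral_featurePotential [SFinite ρ] (hk : Measurable (Function.uncurry k))
    (hkb : ∀ᵐ w ∂ρ, ∀ x ∈ K, |k w x| ≤ C) {b : W → ℝ} (hb : Integrable b ρ) {Q : Measure X}
    [IsFiniteMeasure Q] (hQ : Q Kᶜ = 0) :
    ∫ x, featurePotential ρ k b x ∂Q = ∫ w, b w * featureMean k Q w ∂ρ := by
  have hint : Integrable (Function.uncurry fun x w => b w * k w x) (Q.prod ρ) := by
    refine Integrable.mono' ((hb.abs.const_mul C).comp_snd Q)
      (hb.aestronglyMeasurable.comp_snd.mul (hk.comp measurable_swap).aestronglyMeasurable) ?_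
    filter_upwards [Measure.quasiMeasurePreserving_fst.ae (ae_iff.mpr hQ : ∀ᵐ x ∂Q, x ∈ K),
      Measure.quasiMeasurePreserving_snd.ae hkb] with p hp hkp
    rw [Function.uncurry_apply_pair, Real.norm_eq_abs, abs_mul, mul_comm C]
    exact mul_le_mul_of_nonneg_left (hkp p.1 hp) (abs_nonneg _)
  simp only [featurePotential, featureMean, integral_integral_swap hint, integral_const_mul]

lemma integrable_mul_featureMean (hk : Measurable (Function.uncurry k))
    (hkb : ∀ᵐ w ∂ρ, ∀ x ∈ K, |k w x| ≤ C) {b : W → ℝ} (hb : Integrable b ρ) {Q : Measure X}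
    [IsProbabilityMeasure Q] (hQ : Q Kᶜ = 0) :
    Integrable (fun w => b w * featureMean k Q w) ρ :=
  hb.mul_bdd (measurable_featureMean hk Q).aestronglyMeasurable
    (hkb.mono fun _ hw => (Real.norm_eq_abs _).trans_le (abs_featureMean_le hQ hw))

lemma abs_featureMean_sub_featureMean_le {Q₁ Q₂ : Measure X} [IsProbabilityMeasure Q₁]
    [IsProbabilityMeasure Q₂] (hQ₁ : Q₁ Kᶜ = 0) (hQ₂ : Q₂ Kᶜ = 0) {w : W}
    (hw : ∀ x ∈ K, |k w x| ≤ C) : |featureMean k Q₁ w - featureMean k Q₂ w| ≤ C + C :=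
  (abs_sub _ _).trans (add_le_add (abs_featureMean_le hQ₁ hw) (abs_featureMean_le hQ₂ hw))

lemma hasDerivAt_featurePotential [IsFiniteMeasure ρ] (hk : Measurable (Function.uncurry k))
    {a a' : ℝ → W → ℝ} {B : ℝ} (ha : ∀ s, Integrable (a s) ρ)
    (ha' : ∀ s, AEStronglyMeasurable (a' s) ρ)
    (hderiv : ∀ᵐ w ∂ρ, ∀ s, HasDerivAt (a · w) (a' s w) s) (hbound : ∀ᵐ w ∂ρ, ∀ s, |a' s w| ≤ B)
    {x : X} (hkx : ∀ᵐ w ∂ρ, |k w x| ≤ C) (s₀ : ℝ) :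
    HasDerivAt (fun s => featurePotential ρ k (a s) x) (featurePotential ρ k (a' s₀) x) s₀ := by
  have hkm : AEStronglyMeasurable (fun w => k w x) ρ :=
    (hk.comp (measurable_id.prodMk measurable_const)).aestronglyMeasurable
  refine (hasDerivAt_integral_of_dominated_loc_of_deriv_le (Metric.ball_mem_nhds s₀ one_pos)
    (F' := fun s w => a' s w * k w x) (bound := fun _ => B * C)
    (.of_forall fun s => (ha s).aestronglyMeasurable.mul hkm)
    ((ha s₀).mul_bdd hkm (hkx.mono fun _ hw => hw)) ((ha' s₀).mul hkm) ?_ (integrable_const _)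
    (hderiv.mono fun w hw s _ => (hw s).mul_const _)).2
  filter_upwards [hbound, hkx] with w hw hkw s _
  rw [Real.norm_eq_abs, abs_mul]
  exact mul_le_mul (hw s) hkw (abs_nonneg _) ((abs_nonneg _).trans (hw s))

lemma hasDerivAt_gibbsObjective_featurePotential {P Q : Measure X} [IsProbabilityMeasure P]
    [IsProbabilityMeasure Q] [IsProbabilityMeasure ρ] (hQP : Q ≪ P) (hP : P Kᶜ = 0)
    (hk : Measurable (Function.uncurry k)) (hkb : ∀ᵐ w ∂ρ, ∀ x ∈ K, |k w x| ≤ C)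
    {a a' : ℝ → W → ℝ} {B : ℝ} (ha : ∀ s, Integrable (a s) ρ)
    (ha' : ∀ s, AEStronglyMeasurable (a' s) ρ)
    (hderiv : ∀ᵐ w ∂ρ, ∀ s, HasDerivAt (a · w) (a' s w) s) (hbound : ∀ᵐ w ∂ρ, ∀ s, |a' s w| ≤ B)
    (s₀ : ℝ) :
    HasDerivAt (fun s => gibbsObjective P Q (featurePotential ρ k (a s)))
      (∫ w, a' s₀ w * (featureMean k Q w -
        featureMean k (gibbs P (featurePotential ρ k (a s₀))) w) ∂ρ) s₀ := by
  have hK : ∀ᵐ x ∂P, x ∈ K := ae_iff.mpr hP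
  have hQK : Q Kᶜ = 0 := hQP hP
  have hgK : gibbs P (featurePotential ρ k (a s₀)) Kᶜ = 0 := gibbs_absolutelyContinuous _ _ hP
  have : IsProbabilityMeasure (gibbs P (featurePotential ρ k (a s₀))) :=
    isProbabilityMeasure_gibbs (integrable_exp_neg_featurePotential hk hkb (ha s₀) hP)
  have ha'₀ : Integrable (a' s₀) ρ := .of_bound (ha' s₀) B (hbound.mono fun _ hw => hw s₀)
  refine (hasDerivAt_gibbsObjective hQP
    (fun s => (stronglyMeasurable_featurePotential hk (ha s).aestronglyMeasurable
      ).aestronglyMeasurable)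
    (stronglyMeasurable_featurePotential hk (ha' s₀)).aestronglyMeasurable
    (ae_abs_featurePotential_le hkb (ha s₀) hP)
    (hK.mono fun x hx => hasDerivAt_featurePotential hk ha ha' hderiv hbound
      (hkb.mono fun _ hw => hw x hx))
    (hK.mono fun x hx s => abs_featurePotential_le_of_abs_le hkb (hbound.mono fun _ hw => hw s) hx)
    ).congr_deriv ?_
  rw [integral_featurePotential hk hkb ha'₀ hQK, integral_featurePotential hk hkb ha'₀ hgK,
    ← integral_sub (integrable_mul_featureMean hk hkb ha'₀ hQK)
      (integrable_mul_featureMean hk hkb ha'₀ hgK)]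
  simp only [mul_sub]

lemma gibbsObjective_featurePotential_add_le {P Q : Measure X} [IsProbabilityMeasure P]
    [IsProbabilityMeasure Q] [IsProbabilityMeasure ρ] (hQ : Q Kᶜ = 0) (hP : P Kᶜ = 0)
    (hk : Measurable (Function.uncurry k)) (hkb : ∀ᵐ w ∂ρ, ∀ x ∈ K, |k w x| ≤ C)
    {b c : W → ℝ} (hb : Integrable b ρ) (hc : Integrable c ρ) :
    gibbsObjective P Q (featurePotential ρ k c) + ∫ w, (b w - c w) *
        (featureMean k Q w - featureMean k (gibbs P (featurePotential ρ k c)) w) ∂ρ ≤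
      gibbsObjective P Q (featurePotential ρ k b) := by
  set Qc := gibbs P (featurePotential ρ k c)
  have hQc : Qc Kᶜ = 0 := gibbs_absolutelyContinuous _ _ hP
  have : IsProbabilityMeasure Qc :=
    isProbabilityMeasure_gibbs (integrable_exp_neg_featurePotential hk hkb hc hP)
  have hbQ := integrable_mul_featureMean hk hkb hb hQ
  have hcQ := integrable_mul_featureMean hk hkb hc hQ
  have hbQc := integrable_mul_featureMean hk hkb hb hQc
  have hcQc := integrable_mul_featureMean hk hkb hc hQc
  have h := gibbsObjective_add_le (Q := Q) (integrable_exp_neg_featurePotential hk hkb hb hP)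
    (integrable_exp_neg_featurePotential hk hkb hc hP) (integrable_featurePotential hk hkb hb hQc)
    (integrable_featurePotential hk hkb hc hQc)
  rw [integral_featurePotential hk hkb hb hQ, integral_featurePotential hk hkb hc hQ,
    integral_featurePotential hk hkb hb hQc, integral_featurePotential hk hkb hc hQc,
    ← integral_sub hbQ hcQ, ← integral_sub hbQc hcQc] at h
  convert h using 2
  calc _ = ∫ w, (b w * featureMean k Q w - c w * featureMean k Q w) -
          (b w * featureMean k Qc w - c w * featureMean k Qc w) ∂ρ := by
        congr 1 with w; ring
    _ = _ := integral_sub (hbQ.sub hcQ) (hbQc.sub hcQc)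

end Features

theorem gibbsObjective_featurePotential_sub_le {W X : Type*} [MeasurableSpace W]
    [MeasurableSpace X] {ρ : Measure W} [IsProbabilityMeasure ρ] {P Q : Measure X}
    [IsProbabilityMeasure P] [IsProbabilityMeasure Q] (hQP : Q ≪ P) {K : Set X} (hP : P Kᶜ = 0)
    {k : W → X → ℝ} (hk : Measurable (Function.uncurry k)) {C : ℝ}
    (hkb : ∀ᵐ w ∂ρ, ∀ x ∈ K, |k w x| ≤ C) {astar : W → ℝ} (hastar : MemLp astar 2 ρ)
    {a : ℝ → W → ℝ} (ha : ∀ s, MemLp (a s) 2 ρ)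
    (hflow : ∀ s w, HasDerivAt (a · w)
      (-(featureMean k Q w - featureMean k (gibbs P (featurePotential ρ k (a s))) w)) s)
    {t : ℝ} (ht : 0 < t) :
    gibbsObjective P Q (featurePotential ρ k (a t)) -
        gibbsObjective P Q (featurePotential ρ k astar) ≤
      (∫ w, (astar w - a 0 w) ^ 2 ∂ρ) / (2 * t) := by
  set g : ℝ → W → ℝ := fun s w =>
    featureMean k Q w - featureMean k (gibbs P (featurePotential ρ k (a s))) w
  have hQK : Q Kᶜ = 0 := hQP hP
  have hg : ∀ s, AEStronglyMeasurable (fun w => -g s w) ρ := fun s =>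
    ((measurable_featureMean hk Q).sub (measurable_featureMean hk _)).neg.aestronglyMeasurable
  have hg_bound : ∀ᵐ w ∂ρ, ∀ s, |-g s w| ≤ C + C := by
    filter_upwards [hkb] with w hw s
    have := isProbabilityMeasure_gibbs
      (integrable_exp_neg_featurePotential hk hkb ((ha s).integrable one_le_two) hP)
    rw [abs_neg]
    exact abs_featureMean_sub_featureMean_le hQK (gibbs_absolutelyContinuous _ _ hP) hw
  have hderiv : ∀ᵐ w ∂ρ, ∀ s, HasDerivAt (a · w) (-g s w) s := ae_of_all _ fun w s => hflow s w
  refine (sub_le_div_of_lyapunov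
    (hasDerivAt_gibbsObjective_featurePotential hQP hP hk hkb
      (fun s => (ha s).integrable one_le_two) hg hderiv hg_bound)
    (fun s => hasDerivAt_integral_sq (f := fun s w => a s w - astar w)
      (fun s => (ha s).sub hastar) (hg s)
      (hderiv.mono fun w hw s => (hw s).sub_const (astar w)) hg_bound)
    (fun s _ => integral_nonpos fun w => ?_) (fun s _ => ?_)
    (integral_nonneg fun w => sq_nonneg _) ht).trans_eq ?_
  · rw [neg_mul]
    exact neg_nonpos.mpr (mul_self_nonneg _)
  · have h := gibbsObjective_featurePotential_add_le hQK hP hk hkb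
      (hastar.integrable one_le_two) ((ha s).integrable one_le_two)
    have hφ' : (∫ w, 2 * (a s w - astar w) * -g s w ∂ρ) / 2 =
        ∫ w, (astar w - a s w) * g s w ∂ρ := by
      rw [← integral_div]
      congr 1 with w
      ring
    rw [hφ']
    linarith
  · congr 2 with w
    ring

lemma rfObjective_eq_gibbsObjective {d : ℕ} (P Q : Measure (Fin d → ℝ))
    (ρ0 : Measure (Fin (d + 1) → ℝ)) (σ : ℝ → ℝ) (a : (Fin (d + 1) → ℝ) → ℝ) :
    rfObjective P Q ρ0 σ a = gibbsObjective P Q (rfPotential ρ0 σ a) := rfl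

lemma rfPotential_eq_featurePotential {d : ℕ} (ρ0 : Measure (Fin (d + 1) → ℝ)) (σ : ℝ → ℝ) :
    rfPotential ρ0 σ = featurePotential ρ0 fun w x => σ (dotTilde w x) := rfl

lemma measurable_dotTilde {d : ℕ} : Measurable (Function.uncurry (dotTilde (d := d))) := by
  unfold dotTilde
  fun_prop

theorem rf_trainability_general {d : ℕ}
    (K : Set (Fin d → ℝ))
    (P : Measure (Fin d → ℝ)) [IsProbabilityMeasure P] (hPsupp : P Kᶜ = 0)
    (ρ0 : Measure (Fin (d + 1) → ℝ)) [IsProbabilityMeasure ρ0]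
    (σ : ℝ → ℝ) (hσ : Measurable σ)
    (hbdd : ∃ C : ℝ, ∀ᵐ w ∂ρ0, ∀ x ∈ K, |σ (dotTilde w x)| ≤ C)
    (astar : (Fin (d + 1) → ℝ) → ℝ) (hastar : MemLp astar 2 ρ0)
    (Qstar : Measure (Fin d → ℝ))
    (hQstar : Qstar = gibbs P (rfPotential ρ0 σ astar))
    (a : ℝ → (Fin (d + 1) → ℝ) → ℝ) (ha : ∀ t, MemLp (a t) 2 ρ0)
    (hflow : ∀ t : ℝ, ∀ w, HasDerivAt (fun s => a s w)
      (-((∫ x, σ (dotTilde w x) ∂Qstar)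
          - ∫ x, σ (dotTilde w x) ∂(gibbs P (rfPotential ρ0 σ (a t))))) t)
    (t : ℝ) (ht : 0 < t) :
    rfObjective P Qstar ρ0 σ (a t) - rfObjective P Qstar ρ0 σ astar
        ≤ (∫ w, (astar w - a 0 w) ^ 2 ∂ρ0) / (2 * t) ∧
      klDiv Qstar (gibbs P (rfPotential ρ0 σ (a t)))
        ≤ (∫ w, (astar w - a 0 w) ^ 2 ∂ρ0) / (2 * t) := by
  obtain ⟨C, hC⟩ := hbdd
  subst hQstar
  simp only [rfObjective_eq_gibbsObjective, rfPotential_eq_featurePotential] at hflow ⊢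
  set k := fun w x => σ (dotTilde (d := d) w x)
  have hk : Measurable (Function.uncurry k) := hσ.comp measurable_dotTilde
  have hQK := gibbs_absolutelyContinuous P (featurePotential ρ0 k astar) hPsupp
  have hexp := integrable_exp_neg_featurePotential hk hC (hastar.integrable one_le_two) hPsupp
  have := isProbabilityMeasure_gibbs hexp
  have hrate := gibbsObjective_featurePotential_sub_le (gibbs_absolutelyContinuous _ _) hPsupp hk
    hC hastar ha hflow ht
  refine ⟨hrate, ?_⟩
  rw [klDiv_gibbs hexp
    (integrable_exp_neg_featurePotential hk hC ((ha t).integrable one_le_two) hPsupp)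
    (integrable_featurePotential hk hC (hastar.integrable one_le_two) hQK)
    (integrable_featurePotential hk hC ((ha t).integrable one_le_two) hQK)]
  exact hrate

/-- **trainability of the random feature bias potential model.**
If the target `Q* = Q_{V_{a*}}` is generated by a random feature potential and `a_t`
follows the gradient flow of `L(a) = ∫ V_a dQ* + log ∫ e^{-V_a} dP`, i.e.
`d a_t/dt (w) = −∫ σ(w·x̃) d(Q* − Q_{a_t})(x)`, then for every `t > 0`,
`L(a_t) − L(a*) ≤ ‖a* − a_0‖²_{L²(ρ₀)} / (2t)`, equivalently
`KL(Q* ‖ Q_{a_t}) ≤ ‖a* − a_0‖²_{L²(ρ₀)} / (2t)`. -/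
theorem rf_trainability {d : ℕ}
    (K : Set (Fin d → ℝ)) (hK : IsCompact K)
    (P : Measure (Fin d → ℝ)) [IsProbabilityMeasure P] (hPsupp : P Kᶜ = 0)
    (ρ0 : Measure (Fin (d + 1) → ℝ)) [IsProbabilityMeasure ρ0]
    (σ : ℝ → ℝ) (hσ : Measurable σ)
    (hbdd : ∃ C : ℝ, ∀ᵐ w ∂ρ0, ∀ x ∈ K, |σ (dotTilde w x)| ≤ C)
    (astar : (Fin (d + 1) → ℝ) → ℝ) (hastar : MemLp astar 2 ρ0)
    (Qstar : Measure (Fin d → ℝ))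
    (hQstar : Qstar = gibbs P (rfPotential ρ0 σ astar))
    (a : ℝ → (Fin (d + 1) → ℝ) → ℝ) (ha : ∀ t, MemLp (a t) 2 ρ0)
    (hflow : ∀ t : ℝ, ∀ w, HasDerivAt (fun s => a s w)
      (-((∫ x, σ (dotTilde w x) ∂Qstar)
          - ∫ x, σ (dotTilde w x) ∂(gibbs P (rfPotential ρ0 σ (a t))))) t)
    (t : ℝ) (ht : 0 < t) :
    rfObjective P Qstar ρ0 σ (a t) - rfObjective P Qstar ρ0 σ astar
        ≤ (∫ w, (astar w - a 0 w) ^ 2 ∂ρ0) / (2 * t) ∧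
      klDiv Qstar (gibbs P (rfPotential ρ0 σ (a t)))
        ≤ (∫ w, (astar w - a 0 w) ^ 2 ∂ρ0) / (2 * t) :=
  rf_trainability_general K P hPsupp ρ0 σ hσ hbdd astar hastar Qstar hQstar a ha hflow t ht
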